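/- If alpha is a root of multiplicity k of the (m)th derivative p^{(m)} of a monic real polynomial p of degree n with all real roots, and k >= 2, then alpha is a root of p of multiplicity k + m. -/

import Mathlib

/-!
For a nonconstant `p` with only real roots, the Laguerre expression `p'² - p p''` is positive
away from the roots of `p`: writing `p = (X - r) q`, it equals `q² + (X - r)² (q'² - q q'')`.
Hence a multiple root `α` of `p'` (where `p'(α) = p''(α) = 0`) must be a root of `p`, and then
its multiplicity drops by exactly one under differentiation. Since `p'` again has only real
roots (Rolle), induction on `m` gives the claim.
-/

open Polynomial

namespace Polynomial

section Laguerre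

variable {R : Type*} [CommRing R]

noncomputable def laguerre (p : R[X]) : R[X] :=
  derivative p ^ 2 - p * derivative (derivative p)

theorem laguerre_C_mul (a : R) (p : R[X]) : laguerre (C a * p) = C a ^ 2 * laguerre p := by
  simp only [laguerre, derivative_C_mul]
  ring

theorem laguerre_X_sub_C_mul (r : R) (q : R[X]) :
    laguerre ((X - C r) * q) = q ^ 2 + (X - C r) ^ 2 * laguerre q := by
  simp only [laguerre, derivative_mul, derivative_add, derivative_sub, derivative_X,
    derivative_C, sub_zero, one_mul]
  ring

variable [LinearOrder R] [IsStrictOrderedRing R]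

theorem eval_laguerre_prod_X_sub_C_nonneg (s : Multiset R) (x : R) :
    0 ≤ eval x (laguerre (s.map (X - C ·)).prod) := by
  induction s using Multiset.induction_on with
  | empty => simp [laguerre]
  | cons r s ih =>
    rw [Multiset.map_cons, Multiset.prod_cons, laguerre_X_sub_C_mul]
    simp only [eval_add, eval_mul, eval_pow]
    exact add_nonneg (sq_nonneg _) (mul_nonneg (sq_nonneg _) ih)

theorem eval_laguerre_prod_X_sub_C_pos {s : Multiset R} (hs : s ≠ 0) {x : R} (hx : x ∉ s) :
    0 < eval x (laguerre (s.map (X - C ·)).prod) := by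
  obtain ⟨r, hr⟩ := Multiset.exists_mem_of_ne_zero hs
  obtain ⟨s, rfl⟩ := Multiset.exists_cons_of_mem hr
  have hq : eval x (s.map (X - C ·)).prod ≠ 0 := by
    simpa [eval_multiset_prod, Multiset.prod_eq_zero_iff, sub_eq_zero] using
      fun h => hx (Multiset.mem_cons_of_mem h)
  rw [Multiset.map_cons, Multiset.prod_cons, laguerre_X_sub_C_mul]
  simp only [eval_add, eval_mul, eval_pow]
  exact add_pos_of_pos_of_nonneg (sq_pos_of_ne_zero hq)
    (mul_nonneg (sq_nonneg _) (eval_laguerre_prod_X_sub_C_nonneg s x))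

end Laguerre

section Splits

variable {K : Type*} [Field K] [LinearOrder K] [IsStrictOrderedRing K] {p : K[X]} {x : K}

theorem Splits.eval_laguerre_pos (hp : p.Splits) (hdeg : p.natDegree ≠ 0) (hx : ¬p.IsRoot x) :
    0 < eval x (laguerre p) := by
  have hp0 : p ≠ 0 := by rintro rfl; exact hdeg natDegree_zero
  have hroots : x ∉ p.roots := fun h => hx ((mem_roots hp0).mp h)
  rw [hp.eq_prod_roots, laguerre_C_mul, eval_mul]
  have hlc : 0 < eval x (C p.leadingCoeff ^ 2) := by
    simpa using sq_pos_of_ne_zero (leadingCoeff_ne_zero.mpr hp0)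
  exact mul_pos hlc (eval_laguerre_prod_X_sub_C_pos (hp.roots_ne_zero hdeg) hroots)

theorem Splits.isRoot_of_one_lt_rootMultiplicity_derivative (hp : p.Splits)
    (h : 1 < p.derivative.rootMultiplicity x) : p.IsRoot x := by
  by_contra hx
  have h1 : (derivative p).IsRoot x :=
    isRoot_iterate_derivative_of_lt_rootMultiplicity (n := 0) (by omega)
  have h2 : (derivative (derivative p)).IsRoot x :=
    isRoot_iterate_derivative_of_lt_rootMultiplicity (n := 1) h
  have hdeg : p.natDegree ≠ 0 := by
    intro h0
    rw [eq_C_of_natDegree_eq_zero h0, derivative_C, rootMultiplicity_zero] at h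
    omega
  have := hp.eval_laguerre_pos hdeg hx
  simp [laguerre, h1.eq_zero, h2.eq_zero] at this

theorem Splits.rootMultiplicity_eq_rootMultiplicity_derivative_add_one (hp : p.Splits)
    (h : 1 < p.derivative.rootMultiplicity x) :
    p.rootMultiplicity x = p.derivative.rootMultiplicity x + 1 := by
  have hx := hp.isRoot_of_one_lt_rootMultiplicity_derivative h
  have hp0 : p ≠ 0 := by rintro rfl; simp at h
  have := (rootMultiplicity_pos hp0).mpr hx
  rw [derivative_rootMultiplicity_of_root hx]
  omega

end Splits

theorem Splits.derivative_of_real {p : ℝ[X]} (hp : p.Splits) : p.derivative.Splits := by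
  rw [splits_iff_card_roots] at hp ⊢
  refine le_antisymm (card_roots' _) ?_
  have := card_roots_le_derivative p
  rw [natDegree_derivative]
  omega

theorem Splits.rootMultiplicity_eq_rootMultiplicity_iterate_derivative_add {p : ℝ[X]}
    (hp : p.Splits) {x : ℝ} {m : ℕ} (h : 1 < (derivative^[m] p).rootMultiplicity x) :
    p.rootMultiplicity x = (derivative^[m] p).rootMultiplicity x + m := by
  induction m generalizing p with
  | zero => rfl
  | succ m ih =>
    rw [Function.iterate_succ_apply] at h ⊢
    have := ih hp.derivative_of_real h
    rw [hp.rootMultiplicity_eq_rootMultiplicity_derivative_add_one (by omega)]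
    omega

end Polynomial

theorem rootMultiplicity_iterated_deriv_general (p : Polynomial ℝ) (m k : ℕ) (α : ℝ)
    (hsplit : (p.map (RingHom.id ℝ)).Splits)
    (hk : 2 ≤ k)
    (hmult : (Polynomial.derivative^[m] p).rootMultiplicity α = k) :
    p.rootMultiplicity α = k + m := by
  rw [Polynomial.map_id] at hsplit
  subst hmult
  exact hsplit.rootMultiplicity_eq_rootMultiplicity_iterate_derivative_add hk

/-- If `α` is a root of multiplicity `k ≥ 2` of the `m`-th derivative `p⁽ᵐ⁾` of a monic real
polynomial `p` of degree `n ≥ m` with all real roots, then `α` is a root of `p` of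
multiplicity `k + m`. -/
theorem rootMultiplicity_iterated_deriv (p : Polynomial ℝ) (n m k : ℕ) (α : ℝ)
    (hmonic : p.Monic) (hdeg : p.natDegree = n) (hmn : m ≤ n)
    (hsplit : (p.map (RingHom.id ℝ)).Splits)
    (hk : 2 ≤ k)
    (hmult : (Polynomial.derivative^[m] p).rootMultiplicity α = k) :
    p.rootMultiplicity α = k + m :=
  rootMultiplicity_iterated_deriv_general p m k α hsplit hk hmult
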